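/- arXiv:0710.0143 — 3 statements merged into one kernel-verified Lean document; each statement's English description precedes it below -/
import Mathlib

section
/- Let a < b be real numbers, let x_1, …, x_r be distinct points of [a,b] with positive integer multiplicities m_1, …, m_r, and suppose every x_i with m_i ≥ 2 lies in (a,b). Set n = m_1 + ⋯ + m_r. Let f : ℝ → ℝ be continuous on [a,b] and (n−1)-times differentiable on (a,b), and suppose that f^{(k)}(x_i) = 0 for every i and every 0 ≤ k < m_i. Then for every integer k with 0 ≤ k ≤ n−1, the k-th derivative f^{(k)} has at least (∑_{i=1}^r min(k+1, m_i)) − k distinct zeros in [a,b]. -/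
/-- Rolle applied between consecutive zeros of a finite zero set. -/
lemma rolle_finset (g : ℝ → ℝ) (S : Finset ℝ) (hg0 : ∀ y ∈ S, g y = 0)
    (hgc : ∀ s ∈ S, ∀ t ∈ S, s < t → ContinuousOn g (Set.Icc s t)) :
    ∃ T : Finset ℝ, S.card - 1 ≤ T.card ∧ Disjoint T S ∧
      ∀ y ∈ T, (∃ s ∈ S, s < y) ∧ (∃ t ∈ S, y < t) ∧ deriv g y = 0 := by
  induction S using Finset.strongInduction with
  | _ S ih =>
    rcases le_or_gt S.card 1 with h1 | h1
    · exact ⟨∅, by omega, by simp, by simp⟩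
    have hSne : S.Nonempty := Finset.card_pos.mp (by omega)
    set s := S.min' hSne with hs
    have hsS : s ∈ S := S.min'_mem hSne
    set S' := S.erase s with hS'
    have hcard' : S'.card = S.card - 1 := Finset.card_erase_of_mem hsS
    have hS'ne : S'.Nonempty := Finset.card_pos.mp (by omega)
    set s' := S'.min' hS'ne with hs'
    have hs'S' : s' ∈ S' := S'.min'_mem hS'ne
    have hs'S : s' ∈ S := Finset.mem_of_mem_erase hs'S'
    have hss' : s < s' := by
      have h1 : s ≤ s' := S.min'_le _ hs'S
      have h2 : s' ≠ s := Finset.ne_of_mem_erase hs'S'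
      exact lt_of_le_of_ne h1 (Ne.symm h2)
    have hmin' : ∀ y ∈ S', s' ≤ y := fun y hy => S'.min'_le _ hy
    obtain ⟨c, hcmem, hc0⟩ := exists_deriv_eq_zero hss' (hgc s hsS s' hs'S hss')
      (by rw [hg0 s hsS, hg0 s' hs'S])
    have hsub : S' ⊂ S := Finset.erase_ssubset hsS
    obtain ⟨T', hT'card, hT'disj, hT'mem⟩ := ih S' hsub
      (fun y hy => hg0 y (Finset.mem_of_mem_erase hy))
      (fun a ha b hb hab => hgc a (Finset.mem_of_mem_erase ha) b (Finset.mem_of_mem_erase hb) hab)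
    have hcT' : c ∉ T' := by
      intro hc
      obtain ⟨⟨s₁, hs₁, hs₁c⟩, -, -⟩ := hT'mem c hc
      have := hmin' s₁ hs₁
      exact absurd hcmem.2 (by linarith)
    refine ⟨insert c T', ?_, ?_, ?_⟩
    · rw [Finset.card_insert_of_notMem hcT']
      omega
    · rw [Finset.disjoint_left]
      intro y hy hyS
      rcases Finset.mem_insert.mp hy with rfl | hyT'
      · rcases eq_or_ne y s with rfl | hne
        · exact absurd hcmem.1 (lt_irrefl _)
        · exact absurd hcmem.2 (not_lt.mpr (hmin' y (Finset.mem_erase.mpr ⟨hne, hyS⟩)))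
      · obtain ⟨⟨s₁, hs₁, hs₁y⟩, -, -⟩ := hT'mem y hyT'
        have hys : y ≠ s := by
          have := hmin' s₁ hs₁
          intro h; subst h
          have := S.min'_le s₁ (Finset.mem_of_mem_erase hs₁)
          linarith
        exact (Finset.disjoint_left.mp hT'disj hyT') (Finset.mem_erase.mpr ⟨hys, hyS⟩)
    · intro y hy
      rcases Finset.mem_insert.mp hy with rfl | hyT'
      · exact ⟨⟨s, hsS, hcmem.1⟩, ⟨s', hs'S, hcmem.2⟩, hc0⟩
      · obtain ⟨⟨s₁, hs₁, h₁⟩, ⟨t₁, ht₁, h₂⟩, h₃⟩ := hT'mem y hyT'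
        exact ⟨⟨s₁, Finset.mem_of_mem_erase hs₁, h₁⟩,
          ⟨t₁, Finset.mem_of_mem_erase ht₁, h₂⟩, h₃⟩

/-- **Zero-counting lemma for the Generalized Rolle's Theorem.**
Under the hypotheses of the generalized Rolle theorem, for every `k ≤ n - 1` the `k`-th
derivative of `f` has at least `(∑ i, min (k+1) (m i)) - k` distinct zeros in `[a,b]`. -/
theorem generalized_rolle_zero_count (a b : ℝ) (hab : a < b) (r : ℕ)
    (x : Fin r → ℝ) (hx : Function.Injective x)
    (hxI : ∀ i, x i ∈ Set.Icc a b)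
    (m : Fin r → ℕ) (hm : ∀ i, 1 ≤ m i)
    (hmult : ∀ i, 2 ≤ m i → x i ∈ Set.Ioo a b)
    (n : ℕ) (hn : n = ∑ i, m i)
    (f : ℝ → ℝ) (hf_cont : ContinuousOn f (Set.Icc a b))
    (hf_diff : ∀ k < n - 1, DifferentiableOn ℝ (iteratedDeriv k f) (Set.Ioo a b))
    (hzero : ∀ i, ∀ k < m i, iteratedDeriv k f (x i) = 0) :
    ∀ k ≤ n - 1, ∃ S : Finset ℝ,
      (∑ i, min (k + 1) (m i)) - k ≤ S.card ∧
      ∀ y ∈ S, y ∈ Set.Icc a b ∧ iteratedDeriv k f y = 0 := by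
  -- strengthened statement
  suffices key : ∀ k ≤ n - 1, ∃ S : Finset ℝ,
      (∑ i, min (k + 1) (m i)) - k ≤ S.card ∧
      (∀ y ∈ S, (y ∈ Set.Icc a b ∧ iteratedDeriv k f y = 0) ∧ (1 ≤ k → y ∈ Set.Ioo a b)) ∧
      (∀ i, k + 1 ≤ m i → x i ∈ S) by
    intro k hk
    obtain ⟨S, h1, h2, -⟩ := key k hk
    exact ⟨S, h1, fun y hy => (h2 y hy).1⟩
  intro k
  induction k with
  | zero =>
    intro _
    refine ⟨Finset.univ.image x, ?_, ?_, ?_⟩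
    · rw [Finset.card_image_of_injective _ hx, Finset.card_univ, Fintype.card_fin]
      calc (∑ i, min (0 + 1) (m i)) - 0 ≤ ∑ i : Fin r, 1 := by
            simp only [Nat.sub_zero]
            exact Finset.sum_le_sum fun i _ => min_le_left _ _
        _ = r := by simp
    · intro y hy
      obtain ⟨i, -, rfl⟩ := Finset.mem_image.mp hy
      exact ⟨⟨hxI i, by simpa using hzero i 0 (hm i)⟩, by omega⟩
    · intro i _
      exact Finset.mem_image_of_mem x (Finset.mem_univ i)
  | succ k ihk =>
    intro hk1
    have hkn : k < n - 1 := by omega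
    obtain ⟨S, hScard, hSmem, hSx⟩ := ihk (by omega)
    -- continuity of iteratedDeriv k f on segments between points of S
    have hgc : ∀ s ∈ S, ∀ t ∈ S, s < t → ContinuousOn (iteratedDeriv k f) (Set.Icc s t) := by
      intro s hs t ht hst
      rcases Nat.eq_zero_or_pos k with rfl | hkpos
      · simpa [iteratedDeriv_zero] using hf_cont.mono
          (Set.Icc_subset_Icc ((hSmem s hs).1.1).1 ((hSmem t ht).1.1).2)
      · have hsI : s ∈ Set.Ioo a b := (hSmem s hs).2 hkpos
        have htI : t ∈ Set.Ioo a b := (hSmem t ht).2 hkpos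
        have hsub : Set.Icc s t ⊆ Set.Ioo a b :=
          Set.Icc_subset_Ioo hsI.1 htI.2
        exact ((hf_diff k hkn).continuousOn).mono hsub
    obtain ⟨T, hTcard, hTdisj, hTmem⟩ := rolle_finset (iteratedDeriv k f) S
      (fun y hy => (hSmem y hy).1.2) hgc
    set A : Finset ℝ := (Finset.univ.filter (fun i => k + 2 ≤ m i)).image x with hA
    have hAS : A ⊆ S := by
      intro y hy
      obtain ⟨i, hi, rfl⟩ := Finset.mem_image.mp hy
      exact hSx i (by have := (Finset.mem_filter.mp hi).2; omega)
    have hTA : Disjoint T A := hTdisj.mono_right hAS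
    have hAcard : A.card = (Finset.univ.filter (fun i => k + 2 ≤ m i)).card :=
      Finset.card_image_of_injective _ hx
    refine ⟨T ∪ A, ?_, ?_, ?_⟩
    · rw [Finset.card_union_of_disjoint hTA, hAcard]
      have hsum : (∑ i, min (k + 1 + 1) (m i))
          = (∑ i, min (k + 1) (m i)) + (Finset.univ.filter (fun i => k + 2 ≤ m i)).card := by
        rw [Finset.card_filter, ← Finset.sum_add_distrib]
        refine Finset.sum_congr rfl fun i _ => ?_
        by_cases h : k + 2 ≤ m i
        · simp [h, min_eq_left, Nat.min_eq_left (by omega : k + 1 ≤ m i),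
            Nat.min_eq_left (by omega : k + 2 ≤ m i)]
        · simp [h, Nat.min_eq_right (by omega : m i ≤ k + 1),
            Nat.min_eq_right (by omega : m i ≤ k + 1 + 1)]
      omega
    · intro y hy
      rcases Finset.mem_union.mp hy with hyT | hyA
      · obtain ⟨⟨s, hs, hsy⟩, ⟨t, ht, hyt⟩, hdy⟩ := hTmem y hyT
        have haI : a ≤ s := ((hSmem s hs).1.1).1
        have hbI : t ≤ b := ((hSmem t ht).1.1).2
        have hyIoo : y ∈ Set.Ioo a b := ⟨lt_of_le_of_lt haI hsy, lt_of_lt_of_le hyt hbI⟩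
        exact ⟨⟨Set.mem_Icc_of_Ioo hyIoo, by rw [iteratedDeriv_succ]; exact hdy⟩,
          fun _ => hyIoo⟩
      · obtain ⟨i, hi, rfl⟩ := Finset.mem_image.mp hyA
        have hmi : k + 2 ≤ m i := (Finset.mem_filter.mp hi).2
        exact ⟨⟨hxI i, hzero i (k + 1) (by omega)⟩, fun _ => hmult i (by omega)⟩
    · intro i hi
      exact Finset.mem_union_right _ (Finset.mem_image_of_mem x
        (Finset.mem_filter.mpr ⟨Finset.mem_univ i, hi⟩))
end

section
/- Let a < b be real numbers, let x_1, …, x_r be distinct points of [a,b] with positive integer multiplicities m_1, …, m_r, and suppose every x_i with m_i ≥ 2 lies in (a,b). Set h(x) = ∏_{i=1}^r (x − x_i)^{m_i} and n = deg h = ∑ m_i. Let f : ℝ → ℝ be continuous on [a,b] and n-times differentiable on (a,b), and let u, v be real polynomials with v(0) = 1 and deg u + deg v < n, such that the function f·v − u satisfies (f·v − u)^{(k)}(x_i) = 0 for every i ∈ {1,…,r} and every 0 ≤ k < m_i. Then for every x ∈ [a,b] with v(x) ≠ 0 there exists c ∈ (a,b) such that f(x) = u(x)/v(x) + (1/(n!·v(x)))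 · (f·v)^{(n)}(c) · h(x). -/
/-!
Put `g = f·v − u` and let `Z` be the multiset of nodes, `x i` repeated `m i` times, so that
`h` is the nodal polynomial of `Z` and `g` vanishes on `Z` counting multiplicities. For `x₀ ∉ Z`
the function `φ = g − C·h`, with `C = g(x₀)/h(x₀)`, also vanishes at `x₀`: it has `n + 1` zeros
in `[a,b]` counted with multiplicity. Rolle's theorem turns `N` such zeros of a function into
`N - 1` zeros of its derivative, so `φ⁽ⁿ⁾` has a zero `c ∈ (a,b)`. As `deg u < n` and `h` is
monic of degree `n`, this says `(f·v)⁽ⁿ⁾(c) = C·n!`, which is the formula after dividing by `v(x₀)`.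
-/

open Polynomial Set Filter

theorem Polynomial.iteratedDeriv_eval (p : ℝ[X]) (k : ℕ) :
    iteratedDeriv k (fun t => p.eval t) = fun t => (derivative^[k] p).eval t := by
  induction k with
  | zero => rfl
  | succ k ih =>
    ext t
    rw [iteratedDeriv_succ, ih, Function.iterate_succ_apply', Polynomial.deriv]

theorem Polynomial.differentiable_iteratedDeriv_eval (p : ℝ[X]) (k : ℕ) :
    Differentiable ℝ (iteratedDeriv k fun t => p.eval t) := by
  rw [iteratedDeriv_eval]
  exact Polynomial.differentiable _

theorem Polynomial.Monic.iterate_derivative_natDegree {R : Type*} [Semiring R] {p : R[X]}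
    (hp : p.Monic) : derivative^[p.natDegree] p = C (p.natDegree.factorial : R) := by
  ext i
  rw [coeff_iterate_derivative, coeff_C]
  rcases i with _ | i
  · simp [hp.coeff_natDegree, Nat.descFactorial_self]
  · simp [coeff_eq_zero_of_natDegree_lt (by omega : p.natDegree < i + 1 + p.natDegree)]

noncomputable def nodalPolynomial (Z : Multiset ℝ) : ℝ[X] :=
  (Z.map fun p => X - C p).prod

theorem monic_nodalPolynomial (Z : Multiset ℝ) : (nodalPolynomial Z).Monic :=
  monic_multiset_prod_of_monic _ _ fun p _ => monic_X_sub_C p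

theorem natDegree_nodalPolynomial (Z : Multiset ℝ) :
    (nodalPolynomial Z).natDegree = Multiset.card Z :=
  natDegree_multiset_prod_X_sub_C_eq_card Z

theorem iterate_derivative_nodalPolynomial (Z : Multiset ℝ) :
    derivative^[Multiset.card Z] (nodalPolynomial Z) = C ((Multiset.card Z).factorial : ℝ) := by
  simpa only [natDegree_nodalPolynomial] using
    (monic_nodalPolynomial Z).iterate_derivative_natDegree

theorem rootMultiplicity_nodalPolynomial (Z : Multiset ℝ) (p : ℝ) :
    (nodalPolynomial Z).rootMultiplicity p = Z.count p := by
  rw [← count_roots, nodalPolynomial, roots_multiset_prod_X_sub_C]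

theorem eval_nodalPolynomial_sum_replicate {ι : Type*} [Fintype ι] (x : ι → ℝ) (m : ι → ℕ)
    (t : ℝ) : (nodalPolynomial (∑ i, Multiset.replicate (m i) (x i))).eval t =
      ∏ i, (t - x i) ^ m i := by
  have hmap := map_sum (Multiset.mapAddMonoidHom fun p => t - p)
    (fun i => Multiset.replicate (m i) (x i)) Finset.univ
  simp only [Multiset.coe_mapAddMonoidHom, Multiset.map_replicate] at hmap
  rw [nodalPolynomial, eval_multiset_prod, Multiset.map_map]
  simp [hmap, Multiset.prod_sum]

section OpenSet

variable {U : Set ℝ}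

theorem iteratedDeriv_add_eqOn (hU : IsOpen U) {k : ℕ} {F G : ℝ → ℝ}
    (hF : ∀ j < k, DifferentiableOn ℝ (iteratedDeriv j F) U)
    (hG : ∀ j < k, DifferentiableOn ℝ (iteratedDeriv j G) U) :
    EqOn (iteratedDeriv k fun t => F t + G t)
      (fun t => iteratedDeriv k F t + iteratedDeriv k G t) U := by
  induction k with
  | zero => intro t _; simp
  | succ k ih =>
    intro t ht
    have hUt : U ∈ nhds t := hU.mem_nhds ht
    have hEq := ih (fun j hj => hF j (by omega)) fun j hj => hG j (by omega)
    rw [iteratedDeriv_succ, iteratedDeriv_succ, iteratedDeriv_succ,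
      (eventuallyEq_of_mem hUt hEq).deriv_eq]
    exact deriv_add ((hF k k.lt_succ_self).differentiableAt hUt)
      ((hG k k.lt_succ_self).differentiableAt hUt)

theorem differentiableOn_iteratedDeriv_add (hU : IsOpen U) {n : ℕ} {F G : ℝ → ℝ}
    (hF : ∀ k < n, DifferentiableOn ℝ (iteratedDeriv k F) U)
    (hG : ∀ k < n, DifferentiableOn ℝ (iteratedDeriv k G) U) :
    ∀ k < n, DifferentiableOn ℝ (iteratedDeriv k fun t => F t + G t) U := fun k hk =>
  ((hF k hk).add (hG k hk)).congr
    (iteratedDeriv_add_eqOn hU (fun j hj => hF j (by omega)) fun j hj => hG j (by omega))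

theorem differentiableOn_iteratedDeriv_mul (hU : IsOpen U) {n : ℕ} {F G : ℝ → ℝ}
    (hF : ∀ k < n, DifferentiableOn ℝ (iteratedDeriv k F) U)
    (hG : ∀ k < n, DifferentiableOn ℝ (iteratedDeriv k G) U) :
    ∀ k < n, DifferentiableOn ℝ (iteratedDeriv k fun t => F t * G t) U := by
  induction n generalizing F G with
  | zero => intro k hk; omega
  | succ n ih =>
    have hF0 : DifferentiableOn ℝ F U := by simpa using hF 0 n.succ_pos
    have hG0 : DifferentiableOn ℝ G U := by simpa using hG 0 n.succ_pos
    have hF' : ∀ k < n, DifferentiableOn ℝ (iteratedDeriv k (deriv F)) U := fun k hk => by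
      simpa only [iteratedDeriv_succ'] using hF (k + 1) (by omega)
    have hG' : ∀ k < n, DifferentiableOn ℝ (iteratedDeriv k (deriv G)) U := fun k hk => by
      simpa only [iteratedDeriv_succ'] using hG (k + 1) (by omega)
    have hderiv : EqOn (deriv fun t => F t * G t)
        (fun t => deriv F t * G t + F t * deriv G t) U := fun t ht =>
      deriv_fun_mul (hF0.differentiableAt (hU.mem_nhds ht)) (hG0.differentiableAt (hU.mem_nhds ht))
    rintro (_ | k) hk
    · rw [iteratedDeriv_zero]
      exact hF0.mul hG0
    rw [iteratedDeriv_succ']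
    refine (differentiableOn_iteratedDeriv_add hU (ih hF' fun k hk => hG k (by omega))
      (ih (fun k hk => hF k (by omega)) hG') k (by omega)).congr fun t ht => ?_
    exact ((eventuallyEq_of_mem (hU.mem_nhds ht) hderiv).iteratedDeriv k).eq_of_nhds

theorem iteratedDeriv_sub_eval_eqOn (hU : IsOpen U) {k : ℕ} {F : ℝ → ℝ} (p : ℝ[X])
    (hF : ∀ j < k, DifferentiableOn ℝ (iteratedDeriv j F) U) :
    EqOn (iteratedDeriv k fun t => F t - p.eval t)
      (fun t => iteratedDeriv k F t - (derivative^[k] p).eval t) U := by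
  have h := iteratedDeriv_add_eqOn hU hF
    fun j _ => ((-p).differentiable_iteratedDeriv_eval j).differentiableOn
  simpa [sub_eq_add_neg, Polynomial.iteratedDeriv_eval, iterate_derivative_neg] using h

theorem differentiableOn_iteratedDeriv_sub_eval (hU : IsOpen U) {n : ℕ} {F : ℝ → ℝ} (p : ℝ[X])
    (hF : ∀ k < n, DifferentiableOn ℝ (iteratedDeriv k F) U) :
    ∀ k < n, DifferentiableOn ℝ (iteratedDeriv k fun t => F t - p.eval t) U := by
  simpa [sub_eq_add_neg] using differentiableOn_iteratedDeriv_add hU hF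
    fun k _ => ((-p).differentiable_iteratedDeriv_eval k).differentiableOn

end OpenSet

theorem Multiset.filter_lt_add_replicate_count {α : Type*} [LinearOrder α] {Z : Multiset α}
    {y : α} (hy : ∀ p ∈ Z, p ≤ y) : Z.filter (· < y) + Multiset.replicate (Z.count y) y = Z := by
  conv_rhs => rw [← Multiset.filter_add_not (· < y) Z]
  rw [← Multiset.filter_eq']
  congr 1
  refine Multiset.filter_congr fun p hp => ?_
  rw [not_lt]
  exact ⟨fun h => h ▸ le_rfl, fun h => le_antisymm (hy p hp) h⟩

theorem Multiset.count_sum_replicate {ι α : Type*} [Fintype ι] [DecidableEq α] {x : ι → α}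
    (hx : x.Injective) (m : ι → ℕ) (i : ι) :
    (∑ j, Multiset.replicate (m j) (x j)).count (x i) = m i := by
  classical
  simp [Multiset.count_sum', Multiset.count_replicate, hx.eq_iff]

theorem Set.OrdConnected.exists_deriv_eq_zero_above {s : Set ℝ} (hs : s.OrdConnected)
    {ψ : ℝ → ℝ} (hψ : ContinuousOn ψ s) {W : Multiset ℝ} (hW : W ≠ 0) {y : ℝ} (hy : y ∈ s)
    (hWs : ∀ p ∈ W, p ∈ s) (hWy : ∀ p ∈ W, p < y) (hψW : ∀ p ∈ W, ψ p = ψ y) :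
    ∃ z ∈ interior s, (∀ p ∈ W, p < z) ∧ z < y ∧ deriv ψ z = 0 := by
  obtain ⟨y', hy'W, hy'_max⟩ := W.exists_max_image id hW
  have hIcc := hs.out (hWs y' hy'W) hy
  obtain ⟨z, ⟨hy'z, hzy⟩, hz⟩ := exists_deriv_eq_zero (hWy y' hy'W) (hψ.mono hIcc) (hψW y' hy'W)
  exact ⟨z, interior_maximal (Ioo_subset_Icc_self.trans hIcc) isOpen_Ioo ⟨hy'z, hzy⟩,
    fun p hp => (hy'_max p hp).trans_lt hy'z, hzy, hz⟩

def VanishesOnMultiset (ψ : ℝ → ℝ) (Z : Multiset ℝ) : Prop :=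
  ∀ p, ∀ k < Z.count p, iteratedDeriv k ψ p = 0

namespace VanishesOnMultiset

variable {ψ : ℝ → ℝ} {Z Z' : Multiset ℝ}

theorem mono (hZ : VanishesOnMultiset ψ Z) (hle : Z' ≤ Z) : VanishesOnMultiset ψ Z' :=
  fun p k hk => hZ p k (hk.trans_le (Multiset.count_le_of_le p hle))

theorem add (hZ : VanishesOnMultiset ψ Z) (hZ' : VanishesOnMultiset ψ Z')
    (hdisj : ∀ p ∈ Z, p ∉ Z') : VanishesOnMultiset ψ (Z + Z') := by
  intro p k hk
  rw [Multiset.count_add] at hk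
  by_cases hp : p ∈ Z'
  · rw [Multiset.count_eq_zero.mpr fun h => hdisj p h hp, zero_add] at hk
    exact hZ' p k hk
  · rw [Multiset.count_eq_zero.mpr hp, add_zero] at hk
    exact hZ p k hk

end VanishesOnMultiset

theorem vanishesOnMultiset_replicate {ψ : ℝ → ℝ} {m : ℕ} {y : ℝ}
    (h : ∀ k < m, iteratedDeriv k ψ y = 0) : VanishesOnMultiset ψ (Multiset.replicate m y) := by
  intro p k hk
  rw [Multiset.count_replicate] at hk
  split_ifs at hk with hyp
  · exact hyp ▸ h k hk
  · omega

theorem vanishesOnMultiset_eval_of_nodalPolynomial_dvd {Z : Multiset ℝ} {q : ℝ[X]}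
    (hq : nodalPolynomial Z ∣ q) : VanishesOnMultiset (fun t => q.eval t) Z := by
  intro p k hk
  rw [Polynomial.iteratedDeriv_eval]
  rcases eq_or_ne q 0 with rfl | hq0
  · simp
  refine isRoot_iterate_derivative_of_lt_rootMultiplicity (hk.trans_le ?_)
  rw [le_rootMultiplicity_iff hq0, ← rootMultiplicity_nodalPolynomial]
  exact (pow_rootMultiplicity_dvd _ p).trans hq

theorem VanishesOnMultiset.deriv_replicate_count {ψ : ℝ → ℝ} {Z : Multiset ℝ}
    (hZ : VanishesOnMultiset ψ Z) (y : ℝ) :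
    VanishesOnMultiset (deriv ψ) (Multiset.replicate (Z.count y - 1) y) :=
  vanishesOnMultiset_replicate fun k hk => by
    rw [← iteratedDeriv_succ']
    exact hZ y (k + 1) (by omega)

theorem VanishesOnMultiset.deriv_cons_replicate_count_add {ψ : ℝ → ℝ} {Z T : Multiset ℝ}
    (hZ : VanishesOnMultiset ψ Z) {y z : ℝ} (hz : deriv ψ z = 0) (hzy : z < y)
    (hT : VanishesOnMultiset (deriv ψ) T) (hTz : ∀ p ∈ T, p < z) :
    VanishesOnMultiset (deriv ψ) (z ::ₘ (Multiset.replicate (Z.count y - 1) y + T)) := by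
  rw [← Multiset.singleton_add, ← Multiset.replicate_one]
  refine (vanishesOnMultiset_replicate fun k hk => ?_).add
    ((hZ.deriv_replicate_count y).add hT fun p hp hpT => ?_) fun p hp hpT => ?_
  · obtain rfl : k = 0 := by omega
    simpa using hz
  · rw [(Multiset.mem_replicate.mp hp).2] at hpT
    exact lt_asymm (hTz y hpT) hzy
  · rw [(Multiset.mem_replicate.mp hp).2] at hpT
    rcases Multiset.mem_add.mp hpT with hpT | hpT
    · exact hzy.ne (Multiset.mem_replicate.mp hpT).2
    · exact lt_irrefl z (hTz z hpT)

theorem VanishesOnMultiset.exists_deriv_vanishesOnMultiset {s : Set ℝ} (hs : s.OrdConnected)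
    {ψ : ℝ → ℝ} (hψ : ContinuousOn ψ s) {Z : Multiset ℝ} (hZs : ∀ p ∈ Z, p ∈ s)
    (hZint : ∀ p, 2 ≤ Z.count p → p ∈ interior s) (hZ : VanishesOnMultiset ψ Z) :
    ∃ T : Multiset ℝ, Multiset.card T = Multiset.card Z - 1 ∧ (∀ p ∈ T, p ∈ interior s) ∧
      VanishesOnMultiset (deriv ψ) T := by
  induction Z using Multiset.strongInductionOn generalizing s with
  | ih Z ih =>
  rcases eq_or_ne Z 0 with rfl | hZ0
  · exact ⟨0, rfl, by simp, fun _ _ hk => absurd hk (by simp)⟩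
  obtain ⟨y, hyZ, hy_max⟩ := Z.exists_max_image id hZ0
  set m := Z.count y
  set Z' := Z.filter (· < y)
  have hsplit : Z' + Multiset.replicate m y = Z := Multiset.filter_lt_add_replicate_count hy_max
  have hm : 1 ≤ m := Multiset.one_le_count_iff_mem.mpr hyZ
  have hy_int : ∀ p ∈ Multiset.replicate (m - 1) y, p ∈ interior s := fun p hp => by
    obtain ⟨hm2, rfl⟩ := Multiset.mem_replicate.mp hp
    exact hZint p (by omega)
  have hcard : Multiset.card Z = Multiset.card Z' + m := by
    rw [← hsplit, Multiset.card_add, Multiset.card_replicate]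
  rcases eq_or_ne Z' 0 with hZ'0 | hZ'0
  · exact ⟨_, by simp [hcard, hZ'0], hy_int, hZ.deriv_replicate_count y⟩
  have hψ_zero : ∀ p ∈ Z, ψ p = 0 := fun p hp => by
    simpa using hZ p 0 (Multiset.count_pos.mpr hp)
  obtain ⟨z, hz_int, hZ'_lt, hzy, hz⟩ := hs.exists_deriv_eq_zero_above hψ hZ'0 (hZs y hyZ)
    (fun p hp => hZs p (Multiset.mem_of_mem_filter hp)) (fun p hp => (Multiset.mem_filter.mp hp).2)
    fun p hp => by rw [hψ_zero p (Multiset.mem_of_mem_filter hp), hψ_zero y hyZ]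
  have hZ'Z : Z' ≤ Z := Multiset.filter_le _ _
  -- Working in `s ∩ Iio z` keeps the zeros of `deriv ψ` found for `Z'` away from `z` and `y`.
  obtain ⟨T', hT'card, hT'int, hT'⟩ := ih Z'
    (hsplit ▸ lt_add_of_pos_right Z'
      (pos_iff_ne_zero.mpr (Multiset.card_pos.mp (by rw [Multiset.card_replicate]; omega))))
    (hs.inter ordConnected_Iio) (hψ.mono inter_subset_left)
    (fun p hp => ⟨hZs p (Multiset.mem_of_le hZ'Z hp), hZ'_lt p hp⟩)
    (fun p hp => by
      rw [interior_inter, interior_Iio]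
      exact ⟨hZint p (hp.trans (Multiset.count_le_of_le p hZ'Z)),
        hZ'_lt p (Multiset.count_pos.mp (by omega))⟩)
    (hZ.mono hZ'Z)
  rw [interior_inter, interior_Iio] at hT'int
  refine ⟨z ::ₘ (Multiset.replicate (m - 1) y + T'), ?_, ?_,
    hZ.deriv_cons_replicate_count_add hz hzy hT' fun p hp => (hT'int p hp).2⟩
  · simp only [Multiset.card_cons, Multiset.card_add, Multiset.card_replicate, hT'card, hcard]
    have := Multiset.card_pos.mpr hZ'0
    omega
  · intro p hp
    simp only [Multiset.mem_cons, Multiset.mem_add] at hp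
    rcases hp with rfl | hp | hp
    exacts [hz_int, hy_int p hp, (hT'int p hp).1]

theorem VanishesOnMultiset.exists_iteratedDeriv_eq_zero {s : Set ℝ} (hs : s.OrdConnected)
    {n : ℕ} {g : ℝ → ℝ} (hg : ContinuousOn g s)
    (hg_diff : ∀ k < n, DifferentiableOn ℝ (iteratedDeriv (k + 1) g) (interior s))
    {Z : Multiset ℝ} (hcard : Multiset.card Z = n + 2) (hZs : ∀ p ∈ Z, p ∈ s)
    (hZint : ∀ p, 2 ≤ Z.count p → p ∈ interior s) (hZ : VanishesOnMultiset g Z) :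
    ∃ c ∈ interior s, iteratedDeriv (n + 1) g c = 0 := by
  induction n generalizing s g Z with
  | zero =>
    obtain ⟨T, hTcard, hTint, hT⟩ := hZ.exists_deriv_vanishesOnMultiset hs hg hZs hZint
    obtain ⟨c, rfl⟩ := Multiset.card_eq_one.mp (by omega : Multiset.card T = 1)
    exact ⟨c, hTint c (Multiset.mem_singleton_self c), by simpa using hT c 0 (by simp)⟩
  | succ n ih =>
    obtain ⟨T, hTcard, hTint, hT⟩ := hZ.exists_deriv_vanishesOnMultiset hs hg hZs hZint
    have hg' : ContinuousOn (deriv g) (interior s) := by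
      simpa using (hg_diff 0 n.succ_pos).continuousOn
    have hg'_diff : ∀ k < n, DifferentiableOn ℝ (iteratedDeriv (k + 1) (deriv g))
        (interior (interior s)) := fun k hk => by
      simpa only [interior_interior, ← iteratedDeriv_succ'] using hg_diff (k + 1) (by omega)
    have hTint' : ∀ p, 2 ≤ T.count p → p ∈ interior (interior s) := fun p hp => by
      simpa using hTint p (Multiset.count_pos.mp (by omega))
    obtain ⟨c, hc, hc0⟩ := ih hs.interior hg' hg'_diff (by omega) hTint hTint' hT
    exact ⟨c, by simpa using hc, by rwa [iteratedDeriv_succ']⟩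

theorem VanishesOnMultiset.exists_mem_Ioo_iteratedDeriv_eq_zero {F : ℝ → ℝ} {Z : Multiset ℝ}
    (hF : VanishesOnMultiset F Z) {a b : ℝ} {n : ℕ} (hn : n ≠ 0)
    (hF_cont : ContinuousOn F (Icc a b))
    (hF_diff : ∀ k < n, DifferentiableOn ℝ (iteratedDeriv k F) (Ioo a b))
    (hcard : Multiset.card Z = n + 1) (hZs : ∀ p ∈ Z, p ∈ Icc a b)
    (hZint : ∀ p, 2 ≤ Z.count p → p ∈ Ioo a b) :
    ∃ c ∈ Ioo a b, iteratedDeriv n F c = 0 := by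
  obtain ⟨n, rfl⟩ := Nat.exists_eq_add_one_of_ne_zero hn
  rw [← interior_Icc] at hF_diff hZint ⊢
  exact hF.exists_iteratedDeriv_eq_zero ordConnected_Icc hF_cont
    (fun k hk => hF_diff (k + 1) (by omega)) hcard hZs hZint

theorem VanishesOnMultiset.sub_eval {U : Set ℝ} (hU : IsOpen U) {F : ℝ → ℝ} {Z : Multiset ℝ}
    {q : ℝ[X]} (hF_diff : ∀ k < Multiset.card Z, DifferentiableOn ℝ (iteratedDeriv k F) U)
    (hZU : ∀ p, 2 ≤ Z.count p → p ∈ U) (hF : VanishesOnMultiset F Z)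
    (hq : VanishesOnMultiset (fun t => q.eval t) Z) :
    VanishesOnMultiset (fun t => F t - q.eval t) Z := by
  intro p k hk
  have hqk := hq p k hk
  rcases k with _ | k
  · have hF0 := hF p 0 hk
    simp only [iteratedDeriv_zero] at hF0 hqk ⊢
    rw [hF0, hqk, sub_zero]
  have hkZ := Multiset.count_le_card p Z
  rw [iteratedDeriv_sub_eval_eqOn hU q (fun j hj => hF_diff j (by omega)) (hZU p (by omega))]
  simpa [hF p _ hk, Polynomial.iteratedDeriv_eval] using hqk

theorem VanishesOnMultiset.exists_eq_iteratedDeriv_mul_nodalPolynomial {F : ℝ → ℝ}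
    {Z : Multiset ℝ} (hF : VanishesOnMultiset F Z) (hZ0 : Z ≠ 0) {a b : ℝ} (hab : a < b)
    (hF_cont : ContinuousOn F (Icc a b))
    (hF_diff : ∀ k < Multiset.card Z, DifferentiableOn ℝ (iteratedDeriv k F) (Ioo a b))
    (hZs : ∀ p ∈ Z, p ∈ Icc a b) (hZint : ∀ p, 2 ≤ Z.count p → p ∈ Ioo a b)
    {x₀ : ℝ} (hx₀ : x₀ ∈ Icc a b) :
    ∃ c ∈ Ioo a b, F x₀ = iteratedDeriv (Multiset.card Z) F c /
      (Multiset.card Z).factorial * (nodalPolynomial Z).eval x₀ := by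
  set H := nodalPolynomial Z
  by_cases hx₀Z : x₀ ∈ Z
  · have hH := vanishesOnMultiset_eval_of_nodalPolynomial_dvd (dvd_refl H) x₀ 0
      (Multiset.count_pos.mpr hx₀Z)
    have hF0 := hF x₀ 0 (Multiset.count_pos.mpr hx₀Z)
    simp only [iteratedDeriv_zero] at hH hF0
    exact ⟨(a + b) / 2, ⟨by linarith, by linarith⟩, by rw [hF0, hH, mul_zero]⟩
  have hH : H.eval x₀ ≠ 0 := fun h => hx₀Z <| by
    rw [← roots_multiset_prod_X_sub_C Z]
    exact (mem_roots (monic_nodalPolynomial Z).ne_zero).mpr h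
  set C₀ := F x₀ / H.eval x₀
  have hφ : VanishesOnMultiset (fun t => F t - (C₀ • H).eval t) (x₀ ::ₘ Z) := by
    rw [← Multiset.singleton_add, ← Multiset.replicate_one]
    refine (vanishesOnMultiset_replicate fun k hk => ?_).add (hF.sub_eval isOpen_Ioo hF_diff hZint
      (vanishesOnMultiset_eval_of_nodalPolynomial_dvd ⟨C C₀, by rw [smul_eq_C_mul, mul_comm]⟩))
      fun p hp => (Multiset.eq_of_mem_replicate hp) ▸ hx₀Z
    obtain rfl : k = 0 := by omega
    simp [C₀, hH]
  obtain ⟨c, hc, hc0⟩ := hφ.exists_mem_Ioo_iteratedDeriv_eq_zero (Multiset.card_pos.mpr hZ0).ne'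
    (hF_cont.sub (C₀ • H).continuous.continuousOn)
    (differentiableOn_iteratedDeriv_sub_eval isOpen_Ioo (C₀ • H) hF_diff) (by simp)
    (by simpa using ⟨hx₀, hZs⟩) fun p hp => hZint p <| by
      rcases eq_or_ne p x₀ with rfl | hpx₀
      · rw [Multiset.count_cons_self, Multiset.count_eq_zero.mpr hx₀Z] at hp
        omega
      · rwa [Multiset.count_cons_of_ne hpx₀] at hp
  have hFc := iteratedDeriv_sub_eval_eqOn isOpen_Ioo (C₀ • H) hF_diff hc
  rw [iterate_derivative_smul, iterate_derivative_nodalPolynomial, hc0] at hFc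
  simp only [eval_smul, eval_C, smul_eq_mul] at hFc
  refine ⟨c, hc, ?_⟩
  rw [show iteratedDeriv (Multiset.card Z) F c = C₀ * (Multiset.card Z).factorial by linarith,
    mul_div_cancel_right₀ _ (Nat.cast_ne_zero.mpr (Nat.factorial_ne_zero _)), div_mul_cancel₀ _ hH]

theorem rational_approximation_general (a b : ℝ) (hab : a < b) (r : ℕ)
    (x : Fin r → ℝ) (hx : Function.Injective x)
    (hxI : ∀ i, x i ∈ Set.Icc a b)
    (m : Fin r → ℕ)
    (hmult : ∀ i, 2 ≤ m i → x i ∈ Set.Ioo a b)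
    (h : ℝ → ℝ) (hh : h = fun t => ∏ i, (t - x i) ^ m i)
    (n : ℕ) (hn : n = ∑ i, m i)
    (f : ℝ → ℝ) (hf_cont : ContinuousOn f (Set.Icc a b))
    (hf_diff : ∀ k < n, DifferentiableOn ℝ (iteratedDeriv k f) (Set.Ioo a b))
    (u v : Polynomial ℝ)
    (hdeg : u.natDegree + v.natDegree < n)
    (hinterp : ∀ i, ∀ k < m i,
      iteratedDeriv k (fun t => f t * v.eval t - u.eval t) (x i) = 0) :
    ∀ x₀ ∈ Set.Icc a b, v.eval x₀ ≠ 0 → ∃ c ∈ Set.Ioo a b,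
      f x₀ = u.eval x₀ / v.eval x₀ +
        1 / ((n.factorial : ℝ) * v.eval x₀) *
          iteratedDeriv n (fun t => f t * v.eval t) c * h x₀ := by
  intro x₀ hx₀ hvx₀
  set Z := ∑ i, Multiset.replicate (m i) (x i)
  have hZ_mem : ∀ p ∈ Z, ∃ i, p = x i := fun p hp => by
    obtain ⟨i, -, hi⟩ := Multiset.mem_sum.mp hp
    exact ⟨i, Multiset.eq_of_mem_replicate hi⟩
  have hcard : Multiset.card Z = n := by simp [Z, hn]
  have hg_diff := differentiableOn_iteratedDeriv_mul isOpen_Ioo hf_diff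
    fun k _ => (v.differentiable_iteratedDeriv_eval k).differentiableOn
  have hF : VanishesOnMultiset (fun t => f t * v.eval t - u.eval t) Z := fun p k hk => by
    obtain ⟨i, rfl⟩ := hZ_mem p (Multiset.count_pos.mp (by omega))
    exact hinterp i k (Multiset.count_sum_replicate hx m i ▸ hk)
  obtain ⟨c, hc, hfc⟩ := hF.exists_eq_iteratedDeriv_mul_nodalPolynomial
    (Multiset.card_pos.mp (by omega)) hab
    ((hf_cont.mul v.continuous.continuousOn).sub u.continuous.continuousOn)
    (hcard ▸ differentiableOn_iteratedDeriv_sub_eval isOpen_Ioo u hg_diff)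
    (fun p hp => by obtain ⟨i, rfl⟩ := hZ_mem p hp; exact hxI i)
    (fun p hp => by
      obtain ⟨i, rfl⟩ := hZ_mem p (Multiset.count_pos.mp (by omega))
      exact hmult i (Multiset.count_sum_replicate hx m i ▸ hp))
    hx₀
  rw [hcard, eval_nodalPolynomial_sum_replicate, ← congrFun hh x₀,
    iteratedDeriv_sub_eval_eqOn isOpen_Ioo u hg_diff hc, iterate_derivative_eq_zero (by omega)]
    at hfc
  simp only [eval_zero, sub_zero] at hfc
  refine ⟨c, hc, ?_⟩
  field_simp at hfc ⊢
  linarith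

/-- **Rational Approximation Theorem.**
Let `u, v` be real polynomials with `v 0 = 1` and `deg u + deg v < n`, where
`h t = ∏ i, (t - x i) ^ m i` has degree `n = ∑ i, m i` at distinct nodes `x i ∈ [a,b]`
(nodes of multiplicity `≥ 2` lying in `(a,b)`). If `f` is continuous on `[a,b]`,
`n`-times differentiable on `(a,b)`, and `f·v - u` vanishes to order `m i` at each `x i`,
then for every `x ∈ [a,b]` with `v x ≠ 0` there is `c ∈ (a,b)` with
`f x = u x / v x + (1 / (n! * v x)) * (f·v)^{(n)}(c) * h x`. -/
theorem rational_approximation (a b : ℝ) (hab : a < b) (r : ℕ)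
    (x : Fin r → ℝ) (hx : Function.Injective x)
    (hxI : ∀ i, x i ∈ Set.Icc a b)
    (m : Fin r → ℕ) (hm : ∀ i, 1 ≤ m i)
    (hmult : ∀ i, 2 ≤ m i → x i ∈ Set.Ioo a b)
    (h : ℝ → ℝ) (hh : h = fun t => ∏ i, (t - x i) ^ m i)
    (n : ℕ) (hn : n = ∑ i, m i)
    (f : ℝ → ℝ) (hf_cont : ContinuousOn f (Set.Icc a b))
    (hf_diff : ∀ k < n, DifferentiableOn ℝ (iteratedDeriv k f) (Set.Ioo a b))
    (u v : Polynomial ℝ) (hv0 : v.eval 0 = 1)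
    (hdeg : u.natDegree + v.natDegree < n)
    (hinterp : ∀ i, ∀ k < m i,
      iteratedDeriv k (fun t => f t * v.eval t - u.eval t) (x i) = 0) :
    ∀ x₀ ∈ Set.Icc a b, v.eval x₀ ≠ 0 → ∃ c ∈ Set.Ioo a b,
      f x₀ = u.eval x₀ / v.eval x₀ +
        1 / ((n.factorial : ℝ) * v.eval x₀) *
          iteratedDeriv n (fun t => f t * v.eval t) c * h x₀ :=
  rational_approximation_general a b hab r x hx hxI m hmult h hh n hn f hf_cont hf_diff u v hdeg
    hinterp
end

section
/- Let a < b be real numbers, let x_1, …, x_r be distinct points of (a,b) with positive integer multiplicities m_1, …, m_r, set h(x) = ∏_{i=1}^r (x − x_i)^{m_i} and n = ∑ m_i. Let f : ℝ → ℝ be continuous on [a,b], n-times differentiable on (a,b), and m_i-times continuously differentiable on a neighborhood of x_i for a fixed index i. Let g be a real polynomial with deg g < n such that f^{(k)}(x_j) = g^{(k)}(x_j) for every j ∈ {1,…,r} and every 0 ≤ k < m_j. Then there exists c ∈ (a,b) such that (f^{(m_i)}(x_i) − g^{(m_i)}(x_i)) / h^{(m_i)}(x_i) = f^{(n)}(c)/n!.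 -/
/-!
Let `H` be the monic polynomial whose roots are the nodes, counted with multiplicity, and let `K`
be the left-hand side. Then `F = f - (g + K H)` has a zero of order `m j` at each `x j`, and of
order `m i + 1` at `x i` by the choice of `K`: `n + 1` zeros in `(a, b)` counted with
multiplicity. Passing from `F` to `F'` lowers every multiplicity by one, while Rolle's theorem
puts a new zero strictly between any two consecutive distinct zeros, so the count drops by at
most one. Hence `F⁽ⁿ⁾ = f⁽ⁿ⁾ - K n!` (recall `deg g < n`) vanishes somewhere in `(a, b)`.
-/

open Set Polynomial

namespace Polynomial

theorem iterate_derivative_natDegree {R : Type*} [Semiring R] (p : R[X]) :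
    derivative^[p.natDegree] p = C (p.natDegree.factorial • p.leadingCoeff) := by
  rw [eq_C_of_natDegree_le_zero ((natDegree_iterate_derivative p _).trans (Nat.sub_self _).le),
    coeff_iterate_derivative, zero_add, Nat.descFactorial_self, leadingCoeff]

theorem eval_iterate_derivative_rootMultiplicity_ne_zero {R : Type*} [CommRing R] [IsDomain R]
    [CharZero R] {p : R[X]} (hp : p ≠ 0) (t : R) :
    (derivative^[p.rootMultiplicity t] p).eval t ≠ 0 := by
  rw [eval_iterate_derivative_rootMultiplicity, nsmul_eq_mul]
  exact mul_ne_zero (Nat.cast_ne_zero.mpr (Nat.factorial_ne_zero _))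
    (eval_divByMonic_pow_rootMultiplicity_ne_zero t hp)

variable {R : Type*} [CommRing R]

theorem rootMultiplicity_multiset_prod_X_sub_C [IsDomain R] [DecidableEq R] (s : Multiset R)
    (a : R) : rootMultiplicity a (s.map fun b => X - C b).prod = s.count a := by
  rw [← count_roots, roots_multiset_prod_X_sub_C]

theorem iterate_derivative_card_multiset_prod_X_sub_C [Nontrivial R] (s : Multiset R) :
    derivative^[Multiset.card s] (s.map fun a => X - C a).prod = (Multiset.card s).factorial := by
  rw [← natDegree_multiset_prod_X_sub_C_eq_card s, iterate_derivative_natDegree,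
    (monic_multiset_prod_of_monic _ _ fun a _ => monic_X_sub_C a).leadingCoeff, nsmul_one,
    map_natCast]

end Polynomial

section PolynomialDerivatives

variable {𝕜 : Type*} [NontriviallyNormedField 𝕜]

theorem iteratedDeriv_polynomial_eval (P : 𝕜[X]) (k : ℕ) :
    iteratedDeriv k (fun t => P.eval t) = fun t => (derivative^[k] P).eval t := by
  induction k generalizing P with
  | zero => simp
  | succ k ih =>
    have hderiv : deriv (fun t => P.eval t) = fun t => P.derivative.eval t :=
      funext fun _ => P.deriv
    rw [iteratedDeriv_succ', hderiv, ih, Function.iterate_succ_apply]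

theorem iteratedDeriv_sub_polynomial_eval {s : Set 𝕜} (hs : IsOpen s) {f : 𝕜 → 𝕜} {n : ℕ}
    (hf : ∀ k < n, DifferentiableOn 𝕜 (iteratedDeriv k f) s) (P : 𝕜[X]) {l : ℕ} (hl : l ≤ n) :
    EqOn (iteratedDeriv l fun t => f t - P.eval t)
      (fun t => iteratedDeriv l f t - (derivative^[l] P).eval t) s := by
  induction l with
  | zero => intro y _; simp
  | succ l ih =>
    intro y hy
    have hdf : DifferentiableAt 𝕜 (iteratedDeriv l f) y :=
      (hf l (by omega) y hy).differentiableAt (hs.mem_nhds hy)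
    rw [iteratedDeriv_succ, ((ih (by omega)).eventuallyEq_of_mem (hs.mem_nhds hy)).deriv_eq,
      deriv_fun_sub hdf (Polynomial.differentiable _).differentiableAt, ← iteratedDeriv_succ,
      Polynomial.deriv, ← Function.iterate_succ_apply' derivative]

end PolynomialDerivatives

section GeneralizedRolle

variable {I : Set ℝ} {F : ℝ → ℝ} {s : Multiset ℝ}

def HasZerosWithMult (F : ℝ → ℝ) (s : Multiset ℝ) : Prop :=
  ∀ y, ∀ l < s.count y, iteratedDeriv l F y = 0

theorem HasZerosWithMult.apply_eq_zero (hs : HasZerosWithMult F s) {y : ℝ} (hy : y ∈ s) :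
    F y = 0 := by
  simpa using hs y 0 (Multiset.count_pos.mpr hy)

theorem exists_finset_deriv_eq_zero_between (hI : I.OrdConnected) (hF : ContinuousOn F I)
    {S : Finset ℝ} (hSI : ∀ y ∈ S, y ∈ I) (hS : ∀ y ∈ S, F y = 0) :
    ∃ T : Finset ℝ, (∀ c ∈ T, c ∈ I ∧ deriv F c = 0) ∧
      ∀ x ∈ S, ∀ y ∈ S, x < y → ∃ c ∈ T, x < c ∧ c < y := by
  classical
  have rolle : ∀ p : ℝ × ℝ, ∃ c, p ∈ S ×ˢ S → p.1 < p.2 →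
      c ∈ Ioo p.1 p.2 ∧ deriv F c = 0 := by
    rintro ⟨x, y⟩
    by_cases hp : (x, y) ∈ S ×ˢ S ∧ x < y
    · obtain ⟨hxy, hlt⟩ := hp
      rw [Finset.mem_product] at hxy
      obtain ⟨c, hc, hc0⟩ := exists_deriv_eq_zero hlt
        (hF.mono (hI.out (hSI x hxy.1) (hSI y hxy.2))) ((hS x hxy.1).trans (hS y hxy.2).symm)
      exact ⟨c, fun _ _ => ⟨hc, hc0⟩⟩
    · exact ⟨0, fun hmem hlt => (hp ⟨hmem, hlt⟩).elim⟩
  choose c hc using rolle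
  refine ⟨((S ×ˢ S).filter fun p => p.1 < p.2).image c, ?_, ?_⟩
  · simp only [Finset.mem_image, Finset.mem_filter, Finset.mem_product]
    rintro _ ⟨⟨x, y⟩, ⟨⟨hx, hy⟩, hxy⟩, rfl⟩
    obtain ⟨hcI, hc0⟩ := hc (x, y) (Finset.mem_product.mpr ⟨hx, hy⟩) hxy
    exact ⟨hI.out (hSI x hx) (hSI y hy) (Ioo_subset_Icc_self hcI), hc0⟩
  · intro x hx y hy hxy
    have hmem : (x, y) ∈ S ×ˢ S := Finset.mem_product.mpr ⟨hx, hy⟩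
    exact ⟨c (x, y), Finset.mem_image_of_mem c (Finset.mem_filter.mpr ⟨hmem, hxy⟩),
      (hc (x, y) hmem hxy).1.1, (hc (x, y) hmem hxy).1.2⟩

theorem HasZerosWithMult.exists_deriv (hI : I.OrdConnected) (hF : ContinuousOn F I)
    (hsI : ∀ y ∈ s, y ∈ I) (hs : HasZerosWithMult F s) :
    ∃ s' : Multiset ℝ, (∀ y ∈ s', y ∈ I) ∧ HasZerosWithMult (deriv F) s' ∧
      Multiset.card s ≤ Multiset.card s' + 1 := by
  classical
  obtain ⟨T, hT, hTS⟩ := exists_finset_deriv_eq_zero_between hI hF (S := s.toFinset)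
    (by simpa using hsI) (by simpa using fun y => hs.apply_eq_zero)
  -- every multiplicity drops by one, and the Rolle points not already in `s` are new zeros
  refine ⟨s - s.dedup + (T \ s.toFinset).val, ?_, ?_, ?_⟩
  · intro y hy
    rcases Multiset.mem_add.mp hy with hy | hy
    · exact hsI y (Multiset.mem_of_le tsub_le_self hy)
    · exact (hT y (Finset.mem_sdiff.mp hy).1).1
  · intro y l hl
    simp only [Multiset.count_add, Multiset.count_sub, Multiset.count_dedup,
      Multiset.count_eq_of_nodup (T \ s.toFinset).nodup, Finset.mem_val, Finset.mem_sdiff,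
      Multiset.mem_toFinset] at hl
    by_cases hy : y ∈ s
    · rw [← iteratedDeriv_succ']
      exact hs y (l + 1) (by simp [hy] at hl; omega)
    · have hyT : y ∈ T := by by_contra h; simp [h, hy] at hl
      obtain rfl : l = 0 := by simpa [hy, hyT] using hl
      simpa using (hT y hyT).2
  · have hT_card := Finset.card_le_sdiff_of_interleaved (s := s.toFinset) (t := T)
      (fun x hx y hy hxy _ => hTS x hx y hy hxy)
    have hdedup := Multiset.card_le_card (Multiset.dedup_le s)
    rw [Multiset.card_toFinset] at hT_card
    rw [Multiset.card_add, Multiset.card_sub (Multiset.dedup_le s), Finset.card_val]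
    omega

theorem HasZerosWithMult.exists_iteratedDeriv_eq_zero (hI : I.OrdConnected) {N : ℕ}
    (hF : ∀ k < N, ContinuousOn (iteratedDeriv k F) I) (hsI : ∀ y ∈ s, y ∈ I)
    (hs : HasZerosWithMult F s) (hN : N < Multiset.card s) :
    ∃ c ∈ I, iteratedDeriv N F c = 0 := by
  induction N generalizing F s with
  | zero =>
    obtain ⟨y, hy⟩ := Multiset.card_pos_iff_exists_mem.mp hN
    exact ⟨y, hsI y hy, by simpa using hs.apply_eq_zero hy⟩
  | succ N ih =>
    obtain ⟨s', hs'I, hs', hcard⟩ := hs.exists_deriv hI (by simpa using hF 0 N.succ_pos) hsI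
    have hF' : ∀ k < N, ContinuousOn (iteratedDeriv k (deriv F)) I := fun k hk => by
      simpa only [iteratedDeriv_succ'] using hF (k + 1) (by omega)
    simpa only [iteratedDeriv_succ'] using ih hF' hs'I hs' (by omega)

end GeneralizedRolle

theorem HasZerosWithMult.sub_polynomial_eval {I : Set ℝ} (hIo : IsOpen I) {f : ℝ → ℝ} {n : ℕ}
    (hf : ∀ k < n, DifferentiableOn ℝ (iteratedDeriv k f) I) {s : Multiset ℝ}
    (hsI : ∀ y ∈ s, y ∈ I) (hsn : Multiset.card s ≤ n + 1) {P : ℝ[X]}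
    (hfP : ∀ y, ∀ k < s.count y, iteratedDeriv k f y = (derivative^[k] P).eval y) :
    HasZerosWithMult (fun t => f t - P.eval t) s := by
  intro y l hl
  have hln : l ≤ n := by have := s.count_le_card y; omega
  rw [iteratedDeriv_sub_polynomial_eval hIo hf P hln (hsI y (Multiset.count_pos.mp (by omega)))]
  exact sub_eq_zero.mpr (hfP y l hl)

theorem hermite_mean_remainder {I : Set ℝ} (hIo : IsOpen I) (hI : I.OrdConnected)
    {s : Multiset ℝ} (hsI : ∀ y ∈ s, y ∈ I) {f : ℝ → ℝ}
    (hf : ∀ k < Multiset.card s, DifferentiableOn ℝ (iteratedDeriv k f) I)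
    {g : ℝ[X]} (hg : g.degree < Multiset.card s)
    (hfg : ∀ y, ∀ k < s.count y, iteratedDeriv k f y = (derivative^[k] g).eval y)
    {z : ℝ} (hz : z ∈ I) :
    ∃ c ∈ I, (iteratedDeriv (s.count z) f z - (derivative^[s.count z] g).eval z) /
        (derivative^[s.count z] (s.map fun a => X - C a).prod).eval z
      = iteratedDeriv (Multiset.card s) f c / (Multiset.card s).factorial := by
  set H : ℝ[X] := (s.map fun a => X - C a).prod
  have hHz : (derivative^[s.count z] H).eval z ≠ 0 := by
    simpa only [rootMultiplicity_multiset_prod_X_sub_C] using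
      eval_iterate_derivative_rootMultiplicity_ne_zero (monic_multiset_prod_of_monic _ _
        fun a _ => monic_X_sub_C a).ne_zero z
  set K := (iteratedDeriv (s.count z) f z - (derivative^[s.count z] g).eval z) /
    (derivative^[s.count z] H).eval z
  set P := g + C K * H
  have hP : ∀ k y, (derivative^[k] P).eval y =
      (derivative^[k] g).eval y + K * (derivative^[k] H).eval y := by
    simp [P, iterate_map_add, iterate_derivative_C_mul]
  -- `P` osculates `f` at the nodes as `g` does, and by the choice of `K` to one more order at `z`
  have hfP : ∀ y, ∀ l < (z ::ₘ s).count y, iteratedDeriv l f y = (derivative^[l] P).eval y := by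
    intro y l hl
    rw [Multiset.count_cons] at hl
    rcases lt_or_ge l (s.count y) with hl' | hl'
    · rw [hP, hfg y l hl', (isRoot_iterate_derivative_of_lt_rootMultiplicity (p := H)
        (by rwa [rootMultiplicity_multiset_prod_X_sub_C])).eq_zero, mul_zero, add_zero]
    · obtain ⟨rfl, rfl⟩ : y = z ∧ l = s.count y := by
        split_ifs at hl with h
        · exact ⟨h, by omega⟩
        · omega
      rw [hP, div_mul_cancel₀ _ hHz, add_sub_cancel]
  have hzsI : ∀ y ∈ z ::ₘ s, y ∈ I := by simpa using ⟨hz, hsI⟩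
  obtain ⟨c, hc, hc0⟩ := (HasZerosWithMult.sub_polynomial_eval hIo hf hzsI (by simp) hfP)
    |>.exists_iteratedDeriv_eq_zero hI (N := Multiset.card s)
    (fun k hk => ((hf k hk).continuousOn.sub (derivative^[k] P).continuous.continuousOn).congr
      (iteratedDeriv_sub_polynomial_eval hIo hf P hk.le)) hzsI (by simp)
  refine ⟨c, hc, ?_⟩
  have hfc := iteratedDeriv_sub_polynomial_eval hIo hf P le_rfl hc
  simp only [hc0, hP, iterate_derivative_eq_zero_of_degree_lt hg, H,
    iterate_derivative_card_multiset_prod_X_sub_C, eval_zero, eval_natCast, zero_add] at hfc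
  field_simp
  linarith

section NodeMultiset

variable {R ι : Type*} [Fintype ι] (x : ι → R) (m : ι → ℕ)

theorem prod_map_X_sub_C_sum_replicate [CommRing R] :
    ((∑ j, Multiset.replicate (m j) (x j)).map fun a => X - C a).prod
      = ∏ j, (X - C (x j)) ^ m j := by
  rw [← Multiset.coe_mapAddMonoidHom, map_sum, Multiset.prod_sum]
  simp

theorem count_sum_replicate_of_injective [DecidableEq R] (hx : x.Injective) (j : ι) :
    (∑ k, Multiset.replicate (m k) (x k)).count (x j) = m j := by
  classical
  simp [Multiset.count_sum', Multiset.count_replicate, hx.eq_iff]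

theorem exists_eq_of_mem_sum_replicate {y : R} (hy : y ∈ ∑ k, Multiset.replicate (m k) (x k)) :
    ∃ j, x j = y := by
  simp only [Multiset.mem_sum, Multiset.mem_replicate] at hy
  obtain ⟨j, -, -, rfl⟩ := hy
  exact ⟨j, rfl⟩

end NodeMultiset

theorem generalized_taylor_at_node_general (a b : ℝ) (r : ℕ)
    (x : Fin r → ℝ) (hx : Function.Injective x)
    (hxI : ∀ j, x j ∈ Set.Ioo a b)
    (m : Fin r → ℕ)
    (h : ℝ → ℝ) (hh : h = fun t => ∏ j, (t - x j) ^ m j)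
    (n : ℕ) (hn : n = ∑ j, m j)
    (f : ℝ → ℝ)
    (hf_diff : ∀ k < n, DifferentiableOn ℝ (iteratedDeriv k f) (Set.Ioo a b))
    (i : Fin r)
    (g : Polynomial ℝ) (hg_deg : g.degree < n)
    (hinterp : ∀ j, ∀ k < m j,
      iteratedDeriv k f (x j) = (Polynomial.derivative^[k] g).eval (x j)) :
    ∃ c ∈ Set.Ioo a b,
      (iteratedDeriv (m i) f (x i) - (Polynomial.derivative^[m i] g).eval (x i)) /
          iteratedDeriv (m i) h (x i)
        = iteratedDeriv n f c / (n.factorial : ℝ) := by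
  set s := ∑ j, Multiset.replicate (m j) (x j)
  have hs_card : Multiset.card s = n := by simp [s, Multiset.card_sum, hn]
  have hs_count : ∀ j, s.count (x j) = m j := count_sum_replicate_of_injective x m hx
  have hh' : h = fun t => ((s.map fun a => X - C a).prod).eval t := by
    simp [hh, s, prod_map_X_sub_C_sum_replicate, eval_prod]
  have hfg : ∀ y, ∀ k < s.count y, iteratedDeriv k f y = (derivative^[k] g).eval y := by
    intro y k hk
    obtain ⟨j, rfl⟩ :=
      exists_eq_of_mem_sum_replicate x m (Multiset.count_pos.mp (Nat.zero_lt_of_lt hk))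
    exact hinterp j k (hs_count j ▸ hk)
  obtain ⟨c, hc, hc_eq⟩ := hermite_mean_remainder isOpen_Ioo ordConnected_Ioo
    (fun y hy => (exists_eq_of_mem_sum_replicate x m hy).elim fun j hj => hj ▸ hxI j)
    (hs_card ▸ hf_diff) (hs_card ▸ hg_deg) hfg (hxI i)
  refine ⟨c, hc, ?_⟩
  rw [hh', iteratedDeriv_polynomial_eval, ← hs_count i, hc_eq, hs_card]

/-- **Generalized Taylor's Theorem at an interpolation node.**
Under the hypotheses of the generalized Taylor theorem with all nodes in `(a,b)`, and with `f`
additionally `m i`-times continuously differentiable near the node `x i`, the remainder at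
`x = x i` takes the form
`(f^{(m i)}(x i) - g^{(m i)}(x i)) / h^{(m i)}(x i) = f^{(n)}(c) / n!` for some `c ∈ (a,b)`. -/
theorem generalized_taylor_at_node (a b : ℝ) (hab : a < b) (r : ℕ)
    (x : Fin r → ℝ) (hx : Function.Injective x)
    (hxI : ∀ j, x j ∈ Set.Ioo a b)
    (m : Fin r → ℕ) (hm : ∀ j, 1 ≤ m j)
    (h : ℝ → ℝ) (hh : h = fun t => ∏ j, (t - x j) ^ m j)
    (n : ℕ) (hn : n = ∑ j, m j)
    (f : ℝ → ℝ) (hf_cont : ContinuousOn f (Set.Icc a b))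
    (hf_diff : ∀ k < n, DifferentiableOn ℝ (iteratedDeriv k f) (Set.Ioo a b))
    (i : Fin r)
    (U : Set ℝ) (hU : IsOpen U) (hxiU : x i ∈ U)
    (hf_smooth : ContDiffOn ℝ (m i : ℕ∞) f U)
    (g : Polynomial ℝ) (hg_deg : g.degree < n)
    (hinterp : ∀ j, ∀ k < m j,
      iteratedDeriv k f (x j) = (Polynomial.derivative^[k] g).eval (x j)) :
    ∃ c ∈ Set.Ioo a b,
      (iteratedDeriv (m i) f (x i) - (Polynomial.derivative^[m i] g).eval (x i)) /
          iteratedDeriv (m i) h (x i)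
        = iteratedDeriv n f c / (n.factorial : ℝ) :=
  generalized_taylor_at_node_general a b r x hx hxI m h hh n hn f hf_diff i g hg_deg hinterp
end
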